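/- arXiv:1105.0887 — 2 statements merged into one kernel-verified Lean document; each statement's English description precedes it below -/
import Mathlib

section
/- Let E, W, V be vector spaces over a field k, let α : W → V be a linear map, let v ∈ V, and let e ∈ E be nonzero. If e ⊗ v lies in the image of the map 1⊗α : E ⊗ W → E ⊗ V, then v lies in the image of α. -/
/-- If `e ⊗ v` lies in the image of `1 ⊗ α : E ⊗ W → E ⊗ V` for some nonzero `e`,
then `v` lies in the image of `α`. -/
theorem stmt9 (k E W V : Type*) [Field k]
    [AddCommGroup E] [Module k E] [AddCommGroup W] [Module k W]
    [AddCommGroup V] [Module k V]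
    (α : W →ₗ[k] V) (v : V) (e : E) (he : e ≠ 0)
    (h : e ⊗ₜ[k] v ∈ LinearMap.range (LinearMap.lTensor E α)) :
    v ∈ LinearMap.range α := by
  -- construct a functional g : E →ₗ k with g e = 1
  have hinj : LinearMap.ker (LinearMap.toSpanSingleton k E e) = ⊥ := by
    rw [LinearMap.ker_eq_bot]
    exact smul_left_injective k he
  obtain ⟨g, hg⟩ := (LinearMap.toSpanSingleton k E e).exists_leftInverse_of_injective hinj
  have hge : g e = 1 := by
    have := LinearMap.congr_fun hg 1
    simpa using this
  -- contraction maps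
  let φV : TensorProduct k E V →ₗ[k] V :=
    (TensorProduct.lid k V).toLinearMap ∘ₗ TensorProduct.map g LinearMap.id
  let φW : TensorProduct k E W →ₗ[k] W :=
    (TensorProduct.lid k W).toLinearMap ∘ₗ TensorProduct.map g LinearMap.id
  obtain ⟨x, hx⟩ := h
  have key : ∀ y : TensorProduct k E W, φV (LinearMap.lTensor E α y) = α (φW y) := by
    intro y
    induction y using TensorProduct.induction_on with
    | zero => simp
    | tmul a b => simp [φV, φW]
    | add a b ha hb => simp [map_add, ha, hb]
  have : φV (e ⊗ₜ[k] v) = v := by simp [φV, hge]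
  exact ⟨φW x, by rw [← key x, hx, this]⟩
end

section
/- Let R be an irreducible reduced root system with base S and set of positive roots R⁺, and let μ be a nonzero element of the coweight space satisfying ⟨α, μ⟩ ≥ 0 for all α ∈ S and ⟨α, μ⟩ ∈ {−1, 0, 1} for all α ∈ R. Then there is exactly one simple root α_s ∈ S with ⟨α_s, μ⟩ = 1 (and ⟨α, μ⟩ = 0 for all other α ∈ S), the highest root α̃ satisfies ⟨α̃, μ⟩ = 1, and the coefficient n_{α_s} of α_s in α̃ = Σ n_α α equals 1. -/
variable {V : Type*} [NormedAddCommGroup V] [InnerProductSpace ℝ V]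

/-- A (crystallographic, reduced) root system in a real inner product space. -/
def IsRootSystem (R : Finset V) : Prop :=
  (0 : V) ∉ R ∧
  Submodule.span ℝ (R : Set V) = ⊤ ∧
  (∀ α ∈ R, ∀ β ∈ R,
    β - (2 * (inner ℝ β α : ℝ) / (inner ℝ α α : ℝ)) • α ∈ R) ∧
  (∀ α ∈ R, ∀ β ∈ R, ∃ z : ℤ, 2 * (inner ℝ β α : ℝ) / (inner ℝ α α : ℝ) = (z : ℝ)) ∧
  (∀ α ∈ R, ∀ t : ℝ, t • α ∈ R → t = 1 ∨ t = -1)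

/-- `S` is a base (set of simple roots) of the root system `R`. -/
def IsBase (R S : Finset V) : Prop :=
  S ⊆ R ∧ LinearIndependent ℝ (fun x : (S : Set V) => (x : V)) ∧
  ∀ β ∈ R, (∃ m : V → ℕ, β = ∑ α ∈ S, (m α : ℝ) • α) ∨
    (∃ m : V → ℕ, β = -(∑ α ∈ S, (m α : ℝ) • α))

/-- Irreducibility: `R` admits no partition into two nonempty mutually orthogonal
subsets. -/
def IsIrreducibleRS (R : Finset V) : Prop :=
  ∀ R₁ R₂ : Finset V, (R₁ : Set V) ∪ (R₂ : Set V) = (R : Set V) →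
    (∀ α ∈ R₁, ∀ β ∈ R₂, (inner ℝ α β : ℝ) = 0) → R₁ = ∅ ∨ R₂ = ∅

/-!
Write `α̃ = ∑ nₐ α` and pair with `μ`: every term `nₐ ⟨α, μ⟩` is a nonnegative
integer, and some simple root pairs to `1` since the simple roots span. Hence
`⟨α̃, μ⟩ ≥ 1`, so `⟨α̃, μ⟩ = 1`, which leaves room for exactly one simple root pairing
to `1`, with coefficient `1`.
-/

section WeightedSum

variable {ι : Type*} {s : Finset ι} {n : ι → ℕ} {w : ι → ℝ}

theorem one_le_sum_natCast_mul (hn : ∀ i ∈ s, 1 ≤ n i) (hw : ∀ i ∈ s, 0 ≤ w i)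
    {i : ι} (hi : i ∈ s) (hwi : w i = 1) : 1 ≤ ∑ j ∈ s, (n j : ℝ) * w j :=
  calc (1 : ℝ) ≤ n i * w i := by rw [hwi, mul_one]; exact_mod_cast hn i hi
    _ ≤ ∑ j ∈ s, (n j : ℝ) * w j :=
      Finset.single_le_sum (fun j hj => mul_nonneg (Nat.cast_nonneg _) (hw j hj)) hi

theorem eq_of_sum_natCast_mul_le_one (hn : ∀ i ∈ s, 1 ≤ n i) (hw : ∀ i ∈ s, 0 ≤ w i)
    (hsum : ∑ j ∈ s, (n j : ℝ) * w j ≤ 1) {i k : ι} (hi : i ∈ s) (hk : k ∈ s)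
    (hwi : w i = 1) (hwk : w k = 1) : i = k := by
  classical
  by_contra hik
  have hi' : i ∈ s.erase k := Finset.mem_erase.mpr ⟨hik, hi⟩
  have hrest : 1 ≤ ∑ j ∈ s.erase k, (n j : ℝ) * w j :=
    one_le_sum_natCast_mul (fun j hj => hn j (Finset.mem_of_mem_erase hj))
      (fun j hj => hw j (Finset.mem_of_mem_erase hj)) hi' hwi
  have hsplit := Finset.add_sum_erase s (fun j => (n j : ℝ) * w j) hk
  have hnk : (1 : ℝ) ≤ n k := by exact_mod_cast hn k hk
  simp only [hwk, mul_one] at hsplit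
  linarith

theorem eq_one_of_sum_natCast_mul_le_one (hn : ∀ i ∈ s, 1 ≤ n i) (hw : ∀ i ∈ s, 0 ≤ w i)
    (hsum : ∑ j ∈ s, (n j : ℝ) * w j ≤ 1) {i : ι} (hi : i ∈ s) (hwi : w i = 1) :
    n i = 1 := by
  have hle : (n i : ℝ) * w i ≤ 1 :=
    (Finset.single_le_sum (fun j hj => mul_nonneg (Nat.cast_nonneg _) (hw j hj)) hi).trans hsum
  rw [hwi, mul_one] at hle
  exact le_antisymm (by exact_mod_cast hle) (hn i hi)

end WeightedSum

theorem IsBase.span_eq_top {R S : Finset V} (hspan : Submodule.span ℝ (R : Set V) = ⊤)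
    (hS : IsBase R S) : Submodule.span ℝ (S : Set V) = ⊤ := by
  have hsum_mem : ∀ m : V → ℕ, ∑ α ∈ S, (m α : ℝ) • α ∈ Submodule.span ℝ (S : Set V) :=
    fun m => Submodule.sum_mem _ fun α hα => Submodule.smul_mem _ _ (Submodule.subset_span hα)
  rw [eq_top_iff, ← hspan, Submodule.span_le]
  intro β hβ
  rcases hS.2.2 β hβ with ⟨m, rfl⟩ | ⟨m, rfl⟩
  · exact hsum_mem m
  · exact Submodule.neg_mem _ (hsum_mem m)

theorem stmt15_general (R S : Finset V)
    (hR : IsRootSystem R) (hS : IsBase R S)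
    (μ : V →ₗ[ℝ] ℝ) (hμ0 : μ ≠ 0)
    (hpos : ∀ α ∈ S, 0 ≤ μ α)
    (hval : ∀ α ∈ R, μ α = -1 ∨ μ α = 0 ∨ μ α = 1)
    (αt : V) (hαt : αt ∈ R) (n : V → ℕ) (hαtn : αt = ∑ α ∈ S, (n α : ℝ) • α)
    (hn1 : ∀ α ∈ S, 1 ≤ n α) :
    (∃! αs : V, αs ∈ S ∧ μ αs = 1) ∧
    (∀ α ∈ S, μ α = 0 ∨ μ α = 1) ∧
    μ αt = 1 ∧
    (∀ αs ∈ S, μ αs = 1 → n αs = 1) := by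
  have hsimple : ∀ α ∈ S, μ α = 0 ∨ μ α = 1 := fun α hα => by
    have := hpos α hα
    rcases hval α (hS.1 hα) with h | h | h
    exacts [absurd h (by linarith), Or.inl h, Or.inr h]
  obtain ⟨α₀, hα₀, hμα₀⟩ : ∃ α ∈ S, μ α = 1 := by
    by_contra! hne
    exact hμ0 <| LinearMap.ext_on (hS.span_eq_top hR.2.1) fun α hα =>
      (hsimple α hα).resolve_right (hne α hα)
  have hμαt : μ αt = ∑ α ∈ S, (n α : ℝ) * μ α := by
    simp only [hαtn, map_sum, map_smul, smul_eq_mul]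
  have hαt1 : μ αt = 1 := by
    have := hμαt ▸ one_le_sum_natCast_mul hn1 hpos hα₀ hμα₀
    rcases hval αt hαt with h | h | h <;> linarith
  have hsum : ∑ α ∈ S, (n α : ℝ) * μ α ≤ 1 := (hμαt ▸ hαt1).le
  exact ⟨⟨α₀, ⟨hα₀, hμα₀⟩, fun β ⟨hβ, hμβ⟩ =>
      eq_of_sum_natCast_mul_le_one hn1 hpos hsum hβ hα₀ hμβ hμα₀⟩,
    hsimple, hαt1, fun α hα hμα => eq_one_of_sum_natCast_mul_le_one hn1 hpos hsum hα hμα⟩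

/-- Let `μ` be a nonzero coweight with `⟨α, μ⟩ ≥ 0` for all simple `α` and
`⟨α, μ⟩ ∈ {−1,0,1}` for all roots `α`. Then there is exactly one simple root `α_s`
with `⟨α_s, μ⟩ = 1` (all other simple roots pairing to `0`), the highest root `α̃`
satisfies `⟨α̃, μ⟩ = 1`, and the coefficient of `α_s` in `α̃` equals `1`. -/
theorem stmt15 (R S : Finset V)
    (hR : IsRootSystem R) (hirr : IsIrreducibleRS R) (hS : IsBase R S)
    (μ : V →ₗ[ℝ] ℝ) (hμ0 : μ ≠ 0)
    (hpos : ∀ α ∈ S, 0 ≤ μ α)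
    (hval : ∀ α ∈ R, μ α = -1 ∨ μ α = 0 ∨ μ α = 1)
    (αt : V) (hαt : αt ∈ R) (n : V → ℕ) (hαtn : αt = ∑ α ∈ S, (n α : ℝ) • α)
    (hn1 : ∀ α ∈ S, 1 ≤ n α)
    (hmax : ∀ β ∈ R, ∃ c : V → ℝ, (∀ α ∈ S, 0 ≤ c α) ∧ αt - β = ∑ α ∈ S, c α • α) :
    (∃! αs : V, αs ∈ S ∧ μ αs = 1) ∧
    (∀ α ∈ S, μ α = 0 ∨ μ α = 1) ∧
    μ αt = 1 ∧
    (∀ αs ∈ S, μ αs = 1 → n αs = 1) :=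
  stmt15_general R S hR hS μ hμ0 hpos hval αt hαt n hαtn hn1
end
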